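/- Let N be any set of positive roots in L, and let Ω = {F ∈ L : F ∈ W_6·g for some g ∈ G, and ⟨F, C⟩ ≥ 0 for all C ∈ N}. Then every x ∈ L satisfying ⟨x, E⟩ ≥ 0 for every exceptional class E and ⟨x, C⟩ ≥ 0 for every C ∈ N is a nonnegative integer linear combination of elements of Ω. (This is the lattice-theoretic content of Lemma II.4: when −K_X is nef and N is the set of classes of (−2)-curves, the nef elements of the union of the Weyl orbits of G generate the nef cone of X as a semigroup.) -/
import Mathlib


/-- The intersection form on the divisor class lattice `L = Fin 7 → ℤ`:
`⟨x, y⟩ = x₀y₀ − x₁y₁ − ⋯ − x₆y₆`. -/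
def form (x y : Fin 7 → ℤ) : ℤ :=
  x 0 * y 0 - x 1 * y 1 - x 2 * y 2 - x 3 * y 3 - x 4 * y 4 - x 5 * y 5 - x 6 * y 6

/-- The standard basis vectors `e 0, …, e 6` of `L`. -/
def e (i : Fin 7) : Fin 7 → ℤ := fun j => if j = i then 1 else 0

/-- The anticanonical class `κ = 3e₀ − e₁ − ⋯ − e₆`. -/
def kappa : Fin 7 → ℤ := (3 : ℤ) • e 0 - e 1 - e 2 - e 3 - e 4 - e 5 - e 6

/-- The simple roots `r₀ = e₀ − e₁ − e₂ − e₃` and `rᵢ = eᵢ − e_{i+1}` for `1 ≤ i ≤ 5`. -/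
def r : Fin 6 → (Fin 7 → ℤ) :=
  ![e 0 - e 1 - e 2 - e 3, e 1 - e 2, e 2 - e 3, e 3 - e 4, e 4 - e 5, e 5 - e 6]

lemma form_add_left (x y v : Fin 7 → ℤ) : form (x + y) v = form x v + form y v := by
  simp only [form, Pi.add_apply]; ring

lemma form_smul_left (c : ℤ) (x v : Fin 7 → ℤ) : form (c • x) v = c * form x v := by
  simp only [form, Pi.smul_apply, smul_eq_mul]; ring

/-- The reflection `x ↦ x + ⟨x, v⟩·v` as a ℤ-linear map. -/
def reflMap (v : Fin 7 → ℤ) : (Fin 7 → ℤ) →ₗ[ℤ] (Fin 7 → ℤ) where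
  toFun x := x + form x v • v
  map_add' x y := by
    funext j
    simp only [form, Pi.add_apply, Pi.smul_apply, smul_eq_mul]
    ring
  map_smul' c x := by
    funext j
    simp only [form, Pi.add_apply, Pi.smul_apply, smul_eq_mul, RingHom.id_apply]
    ring

lemma reflMap_invol (v : Fin 7 → ℤ) (hv : form v v = -2) (x : Fin 7 → ℤ) :
    reflMap v (reflMap v x) = x := by
  show (x + form x v • v) + form (x + form x v • v) v • v = x
  rw [form_add_left, form_smul_left, hv]
  module

/-- The reflection `sᵢ(x) = x + ⟨x, rᵢ⟩·rᵢ` through the simple root `rᵢ`,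
as a ℤ-linear automorphism of `L`. -/
def s (i : Fin 6) : (Fin 7 → ℤ) ≃ₗ[ℤ] (Fin 7 → ℤ) :=
  LinearEquiv.ofLinear (reflMap (r i)) (reflMap (r i))
    (LinearMap.ext fun x => reflMap_invol (r i) (by fin_cases i <;> decide) x)
    (LinearMap.ext fun x => reflMap_invol (r i) (by fin_cases i <;> decide) x)

/-- The Weyl group `W₆`: the subgroup of the group of ℤ-linear automorphisms of `L`
generated by the reflections `s₀, …, s₅`. -/
def W6 : Subgroup ((Fin 7 → ℤ) ≃ₗ[ℤ] (Fin 7 → ℤ)) :=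
  Subgroup.closure (Set.range s)

/-- The set `G` of seven classes generating the fundamental domain `A`. -/
def Gset : Set (Fin 7 → ℤ) :=
  {e 0, e 0 - e 1, (2 : ℤ) • e 0 - e 1 - e 2, (3 : ℤ) • e 0 - e 1 - e 2 - e 3,
   (3 : ℤ) • e 0 - e 1 - e 2 - e 3 - e 4, (3 : ℤ) • e 0 - e 1 - e 2 - e 3 - e 4 - e 5,
   (3 : ℤ) • e 0 - e 1 - e 2 - e 3 - e 4 - e 5 - e 6}

/-- A positive root: a root (`⟨x,x⟩ = −2`, `⟨x,κ⟩ = 0`) which is a nonnegative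
integer combination of the simple roots `r₀, …, r₅`. -/
def IsPositiveRoot (x : Fin 7 → ℤ) : Prop :=
  form x x = -2 ∧ form x kappa = 0 ∧ ∃ a : Fin 6 → ℕ, x = ∑ i, (a i : ℤ) • r i

-- NEW MATERIAL
def q : Fin 6 → (Fin 7 → ℤ) :=
  ![e 0, e 0 - e 1, (2 : ℤ) • e 0 - e 1 - e 2, (3 : ℤ) • e 0 - e 1 - e 2 - e 3,
    (3 : ℤ) • e 0 - e 1 - e 2 - e 3 - e 4, (3 : ℤ) • e 0 - e 1 - e 2 - e 3 - e 4 - e 5]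

lemma form_comm (x y : Fin 7 → ℤ) : form x y = form y x := by
  simp only [form]; ring
lemma form_add_right (v x y : Fin 7 → ℤ) : form v (x + y) = form v x + form v y := by
  simp only [form, Pi.add_apply]; ring
lemma form_smul_right (c : ℤ) (v x : Fin 7 → ℤ) : form v (c • x) = c * form v x := by
  simp only [form, Pi.smul_apply, smul_eq_mul]; ring
lemma form_zero_left (v : Fin 7 → ℤ) : form 0 v = 0 := by
  simp only [form, Pi.zero_apply]; ring

def formL (y : Fin 7 → ℤ) : (Fin 7 → ℤ) →+ ℤ :=
  ⟨⟨fun x => form x y, form_zero_left y⟩, fun a b => form_add_left a b y⟩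

lemma form_sum_left {ι : Type*} (s : Finset ι) (f : ι → (Fin 7 → ℤ)) (y : Fin 7 → ℤ) :
    form (∑ i ∈ s, f i) y = ∑ i ∈ s, form (f i) y :=
  map_sum (formL y) f s

lemma form_sum_right {ι : Type*} (s : Finset ι) (y : Fin 7 → ℤ) (f : ι → (Fin 7 → ℤ)) :
    form y (∑ i ∈ s, f i) = ∑ i ∈ s, form y (f i) := by
  rw [form_comm, form_sum_left]
  exact Finset.sum_congr rfl fun i _ => form_comm _ _

lemma e_single (i : Fin 7) : e i = Pi.single i (1 : ℤ) := by
  funext j; rw [Pi.single_apply]; rfl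

lemma expand (x : Fin 7 → ℤ) : x = ∑ j : Fin 7, x j • e j := by
  simp only [e_single]
  rw [show (∑ j : Fin 7, x j • Pi.single j (1:ℤ)) = ∑ j : Fin 7, Pi.single j (x j) from
    Finset.sum_congr rfl fun j _ => by rw [← Pi.single_smul, smul_eq_mul, mul_one]]
  exact (Finset.univ_sum_single x).symm

def T1 : (Fin 7 → ℤ) →ₗ[ℤ] (Fin 7 → ℤ) where
  toFun x := ∑ k : Fin 6, form x (r k) • q k + form x (e 6) • kappa
  map_add' x y := by
    simp only [form_add_left, add_smul, Finset.sum_add_distrib]; abel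
  map_smul' c x := by
    simp only [form_smul_left, mul_smul, RingHom.id_apply, ← Finset.smul_sum, ← smul_add]

lemma T1_e : ∀ j : Fin 7, T1 (e j) = e j := by decide

lemma L1 (x : Fin 7 → ℤ) :
    x = ∑ k : Fin 6, form x (r k) • q k + form x (e 6) • kappa := by
  have h : T1 x = x := by
    conv_lhs => rw [expand x]
    rw [map_sum]
    simp only [map_smul, T1_e]
    exact (expand x).symm
  exact h.symm

def T2 : (Fin 7 → ℤ) →ₗ[ℤ] (Fin 7 → ℤ) where
  toFun x := ∑ k : Fin 6, form (q k) x • r k + form kappa x • e 6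
  map_add' x y := by
    simp only [form_add_right, add_smul, Finset.sum_add_distrib]; abel
  map_smul' c x := by
    simp only [form_smul_right, mul_smul, RingHom.id_apply, ← Finset.smul_sum, ← smul_add]

lemma T2_e : ∀ j : Fin 7, T2 (e j) = e j := by decide

lemma L2 (x : Fin 7 → ℤ) :
    x = ∑ k : Fin 6, form (q k) x • r k + form kappa x • e 6 := by
  have h : T2 x = x := by
    conv_lhs => rw [expand x]
    rw [map_sum]
    simp only [map_smul, T2_e]
    exact (expand x).symm
  exact h.symm

-- scalar facts
lemma dqr : ∀ k i : Fin 6, form (q k) (r i) = if k = i then 1 else 0 := by decide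
lemma dkr : ∀ i : Fin 6, form kappa (r i) = 0 := by decide
lemma drr : ∀ i : Fin 6, form (r i) (r i) = -2 := by decide
lemma drr' : ∀ k i : Fin 6, k ≠ i → 0 ≤ form (r k) (r i) := by decide

lemma form_kappa_eval (v : Fin 7 → ℤ) :
    form kappa v = 3 * v 0 + v 1 + v 2 + v 3 + v 4 + v 5 + v 6 := by
  simp (config := { decide := true }) only [form, kappa, Pi.sub_apply, Pi.smul_apply,
    smul_eq_mul, e, if_true, if_false]
  ring

lemma negdef {v : Fin 7 → ℤ} (hk : form kappa v = 0) (h0 : 0 ≤ form v v) : v = 0 := by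
  rw [form_kappa_eval] at hk
  have hk' : v 1 + v 2 + v 3 + v 4 + v 5 + v 6 = -3 * v 0 := by linarith
  have h0' : v 1 ^ 2 + v 2 ^ 2 + v 3 ^ 2 + v 4 ^ 2 + v 5 ^ 2 + v 6 ^ 2 ≤ v 0 ^ 2 := by
    have h := h0; simp only [form] at h; nlinarith [h]
  have h9 : (v 1 + v 2 + v 3 + v 4 + v 5 + v 6) ^ 2 = 9 * v 0 ^ 2 := by rw [hk']; ring
  have hid : 6 * (v 1 ^ 2 + v 2 ^ 2 + v 3 ^ 2 + v 4 ^ 2 + v 5 ^ 2 + v 6 ^ 2)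
      - (v 1 + v 2 + v 3 + v 4 + v 5 + v 6) ^ 2
      = (v 1 - v 2) ^ 2 + (v 1 - v 3) ^ 2 + (v 1 - v 4) ^ 2 + (v 1 - v 5) ^ 2 + (v 1 - v 6) ^ 2
      + (v 2 - v 3) ^ 2 + (v 2 - v 4) ^ 2 + (v 2 - v 5) ^ 2 + (v 2 - v 6) ^ 2
      + (v 3 - v 4) ^ 2 + (v 3 - v 5) ^ 2 + (v 3 - v 6) ^ 2
      + (v 4 - v 5) ^ 2 + (v 4 - v 6) ^ 2 + (v 5 - v 6) ^ 2 := by ring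
  have hsum : v 1 ^ 2 + v 2 ^ 2 + v 3 ^ 2 + v 4 ^ 2 + v 5 ^ 2 + v 6 ^ 2 ≤ 0 := by
    linarith [sq_nonneg (v 1 - v 2), sq_nonneg (v 1 - v 3), sq_nonneg (v 1 - v 4),
      sq_nonneg (v 1 - v 5), sq_nonneg (v 1 - v 6), sq_nonneg (v 2 - v 3), sq_nonneg (v 2 - v 4),
      sq_nonneg (v 2 - v 5), sq_nonneg (v 2 - v 6), sq_nonneg (v 3 - v 4), sq_nonneg (v 3 - v 5),
      sq_nonneg (v 3 - v 6), sq_nonneg (v 4 - v 5), sq_nonneg (v 4 - v 6), sq_nonneg (v 5 - v 6)]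
  have sq1 := sq_nonneg (v 1); have sq2 := sq_nonneg (v 2); have sq3 := sq_nonneg (v 3)
  have sq4 := sq_nonneg (v 4); have sq5 := sq_nonneg (v 5); have sq6 := sq_nonneg (v 6)
  have h1 : v 1 = 0 := sq_eq_zero_iff.mp (le_antisymm (by linarith) sq1)
  have h2 : v 2 = 0 := sq_eq_zero_iff.mp (le_antisymm (by linarith) sq2)
  have h3 : v 3 = 0 := sq_eq_zero_iff.mp (le_antisymm (by linarith) sq3)
  have h4 : v 4 = 0 := sq_eq_zero_iff.mp (le_antisymm (by linarith) sq4)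
  have h5 : v 5 = 0 := sq_eq_zero_iff.mp (le_antisymm (by linarith) sq5)
  have h6 : v 6 = 0 := sq_eq_zero_iff.mp (le_antisymm (by linarith) sq6)
  have h00 : v 0 = 0 := by omega
  funext j
  fin_cases j <;> assumption

lemma even_sq_sub (n : ℤ) : ∃ k : ℤ, n * n - n = 2 * k := by
  rcases Int.even_or_odd n with ⟨k, hk⟩ | ⟨k, hk⟩
  · exact ⟨2 * k * k - k, by rw [hk]; ring⟩
  · exact ⟨2 * k * k + k, by rw [hk]; ring⟩

lemma even_form {v : Fin 7 → ℤ} (hk : form kappa v = 0) : Even (form v v) := by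
  rw [form_kappa_eval] at hk
  have hform : form v v = (v 0 * v 0 - v 0) - (v 1 * v 1 - v 1) - (v 2 * v 2 - v 2)
      - (v 3 * v 3 - v 3) - (v 4 * v 4 - v 4) - (v 5 * v 5 - v 5) - (v 6 * v 6 - v 6)
      + 4 * v 0 := by
    simp only [form]; linarith
  obtain ⟨a0, g0⟩ := even_sq_sub (v 0); obtain ⟨a1, g1⟩ := even_sq_sub (v 1)
  obtain ⟨a2, g2⟩ := even_sq_sub (v 2); obtain ⟨a3, g3⟩ := even_sq_sub (v 3)
  obtain ⟨a4, g4⟩ := even_sq_sub (v 4); obtain ⟨a5, g5⟩ := even_sq_sub (v 5)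
  obtain ⟨a6, g6⟩ := even_sq_sub (v 6)
  exact ⟨a0 - a1 - a2 - a3 - a4 - a5 - a6 + 2 * v 0, by omega⟩

lemma negdef2 {v : Fin 7 → ℤ} (hk : form kappa v = 0) (hv : v ≠ 0) : form v v ≤ -2 := by
  have h1 : ¬ (0 ≤ form v v) := fun h => hv (negdef hk h)
  obtain ⟨m, hm⟩ := even_form hk
  omega


-- s basics
lemma s_apply (i : Fin 6) (x : Fin 7 → ℤ) : s i x = x + form x (r i) • r i := rfl

lemma s_invol (i : Fin 6) (x : Fin 7 → ℤ) : s i (s i x) = x :=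
  reflMap_invol (r i) (drr i) x

lemma form_s_s (i : Fin 6) (x y : Fin 7 → ℤ) : form (s i x) (s i y) = form x y := by
  rw [s_apply, s_apply, form_add_left, form_add_right, form_add_right, form_smul_left,
    form_smul_right, form_smul_left, form_smul_right, drr i, form_comm y (r i)]
  ring

lemma form_s_adj (i : Fin 6) (x y : Fin 7 → ℤ) : form (s i x) y = form x (s i y) := by
  conv_lhs => rw [← s_invol i y]
  rw [form_s_s]

-- coefficients of a positive-root combination
lemma comb_coeff (a : Fin 6 → ℕ) (k : Fin 6) :
    form (q k) (∑ i, (a i : ℤ) • r i) = a k := by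
  rw [form_sum_right]
  rw [show (∑ i, form (q k) ((a i : ℤ) • r i)) = ∑ i, if k = i then (a i : ℤ) else 0 from
    Finset.sum_congr rfl fun i _ => by rw [form_smul_right, dqr k i]; split <;> ring]
  simp

lemma kappa_comb (a : Fin 6 → ℕ) : form kappa (∑ i, (a i : ℤ) • r i) = 0 := by
  rw [form_sum_right]
  rw [show (∑ i, form kappa ((a i : ℤ) • r i)) = ∑ _i : Fin 6, (0:ℤ) from
    Finset.sum_congr rfl fun i _ => by rw [form_smul_right, dkr i]; ring]
  simp

lemma form_expand (u w : Fin 7 → ℤ) (c : ℤ) : form (u + c • w) (u + c • w)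
    = form u u + c * form u w + c * form w u + c * c * form w w := by
  simp only [form_add_left, form_add_right, form_smul_left, form_smul_right]
  ring

lemma s_kappa (i : Fin 6) : s i kappa = kappa := by
  rw [s_apply, dkr i, zero_smul, add_zero]

lemma crux {C : Fin 7 → ℤ} (hC : IsPositiveRoot C) (i : Fin 6) (hne : C ≠ r i) :
    IsPositiveRoot (s i C) := by
  obtain ⟨hCC, hCk, a, ha⟩ := hC
  have hDD : form (s i C) (s i C) = -2 := by rw [form_s_s]; exact hCC
  have hDk' : form (s i C) kappa = 0 := by rw [form_s_adj, s_kappa]; exact hCk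
  have hDk : form kappa (s i C) = 0 := by rw [form_comm]; exact hDk'
  have hqC : ∀ k, form (q k) C = (a k : ℤ) := by
    intro k
    conv_lhs => rw [ha]
    exact comb_coeff a k
  have hb : ∀ k, form (q k) (s i C) = (a k : ℤ) + form C (r i) * (if k = i then 1 else 0) := by
    intro k
    rw [s_apply, form_add_right, form_smul_right, dqr k i, hqC k]
  have hbi : 0 ≤ form (q i) (s i C) := by
    by_contra hneg'
    push_neg at hneg'
    set β : ℤ := form (q i) (s i C) with hβdef
    have hneg : β < 0 := hneg'
    have hβval : β = (a i : ℤ) + form C (r i) := by rw [hβdef, hb i, if_pos rfl, mul_one]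
    set D : Fin 7 → ℤ := s i C with hDdef
    set P : Fin 7 → ℤ := D + (-β) • r i with hPdef
    have hPk : form kappa P = 0 := by
      rw [hPdef, form_add_right, form_smul_right, dkr i, hDk]; ring
    have hPcoeff : ∀ k, form (q k) P = if k = i then 0 else (a k : ℤ) := by
      intro k
      rw [hPdef, form_add_right, form_smul_right, dqr k i, hb k]
      by_cases h : k = i
      · simp only [if_pos h]
        rw [h, hβval]; ring
      · simp only [if_neg h]; ring
    have hPrep : P = ∑ k, (if k = i then 0 else (a k : ℤ)) • r k := by
      conv_lhs => rw [L2 P]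
      rw [hPk, zero_smul, add_zero]
      exact Finset.sum_congr rfl fun k _ => by rw [hPcoeff k]
    have hPr : 0 ≤ form P (r i) := by
      have hval : form P (r i) = ∑ k, (if k = i then 0 else (a k : ℤ)) * form (r k) (r i) := by
        conv_lhs => rw [hPrep]
        rw [form_sum_left]
        exact Finset.sum_congr rfl fun k _ => form_smul_left _ _ _
      rw [hval]
      apply Finset.sum_nonneg
      intro k _
      by_cases h : k = i
      · rw [if_pos h, zero_mul]
      · rw [if_neg h]
        exact mul_nonneg (Int.natCast_nonneg _) (drr' k i h)
    have hPQ : D = P + β • r i := by rw [hPdef]; module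
    have hDexp : form D D = form P P + β * form P (r i) + β * form (r i) P
        + β * β * form (r i) (r i) := by rw [hPQ]; exact form_expand P (r i) β
    by_cases hP0 : P = 0
    · have hDrep : D = β • r i := by
        have h := hP0
        rw [hPdef, neg_smul, ← sub_eq_add_neg] at h
        exact sub_eq_zero.mp h
      have hform : form D D = β * β * (-2) := by
        rw [hDrep, form_smul_left, form_smul_right, drr]; ring
      have hββ : β * β = 1 := by rw [hDD] at hform; linarith
      have hβ1 : -1 ≤ β := by nlinarith
      have hβ : β = -1 := by omega
      have hC_eq : C = r i := by
        have h1 : C = s i D := (s_invol i C).symm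
        rw [hDrep, hβ] at h1
        rw [h1, s_apply, form_smul_left, drr]
        module
      exact hne hC_eq
    · have hPP : form P P ≤ -2 := negdef2 hPk hP0
      have h4 : β * form P (r i) ≤ 0 :=
        mul_nonpos_of_nonpos_of_nonneg (le_of_lt hneg) hPr
      have h4' : β * form (r i) P ≤ 0 := by rw [form_comm (r i) P]; exact h4
      have hβ2 : 1 ≤ β * β := by nlinarith
      rw [drr i] at hDexp
      rw [hDD] at hDexp
      linarith
  have hbk : ∀ k, 0 ≤ form (q k) (s i C) := by
    intro k
    by_cases h : k = i
    · rw [h]; exact hbi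
    · rw [hb k, if_neg h]
      have := Int.natCast_nonneg (a k)
      linarith
  refine ⟨hDD, hDk', fun k => (form (q k) (s i C)).toNat, ?_⟩
  conv_lhs => rw [L2 (s i C)]
  rw [hDk, zero_smul, add_zero]
  exact Finset.sum_congr rfl fun k _ => by rw [Int.toNat_of_nonneg (hbk k)]

-- theta
def theta : Fin 7 → ℤ := ∑ k : Fin 6, q k

lemma dr_theta : ∀ i : Fin 6, form (r i) theta = 1 := by decide

lemma theta_nonneg {x : Fin 7 → ℤ}
    (hE : ∀ E : Fin 7 → ℤ, form E E = -1 → form E kappa = 1 → 0 ≤ form x E) :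
    0 ≤ form x theta := by
  have hdec : theta = (6:ℤ) • (e 0 - e 1 - e 2) + (4:ℤ) • (e 0 - e 3 - e 4)
      + (3:ℤ) • (e 0 - e 5 - e 6) + e 1 + (2:ℤ) • e 2 + e 3 + (2:ℤ) • e 4
      + (2:ℤ) • e 5 + (3:ℤ) • e 6 := by decide
  rw [hdec]
  simp only [form_add_right, form_smul_right]
  have h12 : 0 ≤ form x (e 0 - e 1 - e 2) := hE _ (by decide) (by decide)
  have h34 : 0 ≤ form x (e 0 - e 3 - e 4) := hE _ (by decide) (by decide)
  have h56 : 0 ≤ form x (e 0 - e 5 - e 6) := hE _ (by decide) (by decide)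
  have h1 : 0 ≤ form x (e 1) := hE _ (by decide) (by decide)
  have h2 : 0 ≤ form x (e 2) := hE _ (by decide) (by decide)
  have h3 : 0 ≤ form x (e 3) := hE _ (by decide) (by decide)
  have h4 : 0 ≤ form x (e 4) := hE _ (by decide) (by decide)
  have h5 : 0 ≤ form x (e 5) := hE _ (by decide) (by decide)
  have h6 : 0 ≤ form x (e 6) := hE _ (by decide) (by decide)
  linarith

-- membership helpers
lemma zsmul_mem_closure {S : Set (Fin 7 → ℤ)} {F : Fin 7 → ℤ} (hF : F ∈ S) {c : ℤ}
    (hc : 0 ≤ c) : c • F ∈ AddSubmonoid.closure S := by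
  obtain ⟨n, rfl⟩ := Int.eq_ofNat_of_zero_le hc
  rw [natCast_zsmul]
  exact AddSubmonoid.nsmul_mem _ (AddSubmonoid.subset_closure hF) n

lemma qG : ∀ k : Fin 6, q k ∈ Gset := by
  intro k
  fin_cases k
  · exact Set.mem_insert _ _
  · exact Set.mem_insert_of_mem _ (Set.mem_insert _ _)
  · exact Set.mem_insert_of_mem _ (Set.mem_insert_of_mem _ (Set.mem_insert _ _))
  · exact Set.mem_insert_of_mem _ (Set.mem_insert_of_mem _ (Set.mem_insert_of_mem _
      (Set.mem_insert _ _)))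
  · exact Set.mem_insert_of_mem _ (Set.mem_insert_of_mem _ (Set.mem_insert_of_mem _
      (Set.mem_insert_of_mem _ (Set.mem_insert _ _))))
  · exact Set.mem_insert_of_mem _ (Set.mem_insert_of_mem _ (Set.mem_insert_of_mem _
      (Set.mem_insert_of_mem _ (Set.mem_insert_of_mem _ (Set.mem_insert _ _)))))

lemma kappaG : kappa ∈ Gset :=
  Set.mem_insert_of_mem _ (Set.mem_insert_of_mem _ (Set.mem_insert_of_mem _
    (Set.mem_insert_of_mem _ (Set.mem_insert_of_mem _ (Set.mem_insert_of_mem _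
      (Set.mem_singleton_iff.mpr rfl))))))

lemma chamber (N : Set (Fin 7 → ℤ)) (hN : ∀ C ∈ N, IsPositiveRoot C) (x : Fin 7 → ℤ)
    (hch : ∀ k : Fin 6, 0 ≤ form x (r k)) (h6 : 0 ≤ form x (e 6)) :
    x ∈ AddSubmonoid.closure
      {F : Fin 7 → ℤ | (∃ g ∈ Gset, ∃ w ∈ W6, w g = F) ∧ ∀ C ∈ N, 0 ≤ form F C} := by
  have hq_mem : ∀ k : Fin 6,
      q k ∈ {F : Fin 7 → ℤ | (∃ g ∈ Gset, ∃ w ∈ W6, w g = F) ∧ ∀ C ∈ N, 0 ≤ form F C} := by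
    intro k
    refine ⟨⟨q k, qG k, 1, one_mem _, rfl⟩, ?_⟩
    intro C hCN
    obtain ⟨_, _, a, ha⟩ := hN C hCN
    rw [ha, comb_coeff]
    exact Int.natCast_nonneg _
  have hk_mem :
      kappa ∈ {F : Fin 7 → ℤ | (∃ g ∈ Gset, ∃ w ∈ W6, w g = F) ∧ ∀ C ∈ N, 0 ≤ form F C} := by
    refine ⟨⟨kappa, kappaG, 1, one_mem _, rfl⟩, ?_⟩
    intro C hCN
    obtain ⟨_, _, a, ha⟩ := hN C hCN
    rw [ha, kappa_comb]
  rw [L1 x]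
  apply AddSubmonoid.add_mem
  · apply AddSubmonoid.sum_mem
    intro k _
    exact zsmul_mem_closure (hq_mem k) (hch k)
  · exact zsmul_mem_closure hk_mem h6

lemma sW6 (i : Fin 6) : s i ∈ W6 := Subgroup.subset_closure (Set.mem_range_self i)

lemma key : ∀ n : ℕ, ∀ N : Set (Fin 7 → ℤ), (∀ C ∈ N, IsPositiveRoot C) →
    ∀ x : Fin 7 → ℤ,
    (∀ E : Fin 7 → ℤ, form E E = -1 → form E kappa = 1 → 0 ≤ form x E) →
    (∀ C ∈ N, 0 ≤ form x C) → (form x theta).toNat ≤ n →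
    x ∈ AddSubmonoid.closure
      {F : Fin 7 → ℤ | (∃ g ∈ Gset, ∃ w ∈ W6, w g = F) ∧ ∀ C ∈ N, 0 ≤ form F C} := by
  intro n
  induction n with
  | zero =>
    intro N hN x hE hC hn
    by_cases hch : ∀ k : Fin 6, 0 ≤ form x (r k)
    · exact chamber N hN x hch (hE (e 6) (by decide) (by decide))
    · exfalso
      push_neg at hch
      obtain ⟨i, hi⟩ := hch
      have hE' : ∀ E : Fin 7 → ℤ, form E E = -1 → form E kappa = 1 → 0 ≤ form (s i x) E := by
        intro E h1 h2
        rw [form_s_adj]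
        exact hE (s i E) (by rw [form_s_s]; exact h1) (by rw [form_s_adj, s_kappa]; exact h2)
      have ht' : form (s i x) theta = form x theta + form x (r i) := by
        rw [s_apply, form_add_left, form_smul_left, dr_theta]
        ring
      have h1 := theta_nonneg hE'
      have h2 := theta_nonneg hE
      omega
  | succ n ih =>
    intro N hN x hE hC hn
    by_cases hch : ∀ k : Fin 6, 0 ≤ form x (r k)
    · exact chamber N hN x hch (hE (e 6) (by decide) (by decide))
    · push_neg at hch
      obtain ⟨i, hi⟩ := hch
      have hE' : ∀ E : Fin 7 → ℤ, form E E = -1 → form E kappa = 1 → 0 ≤ form (s i x) E := by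
        intro E h1 h2
        rw [form_s_adj]
        exact hE (s i E) (by rw [form_s_s]; exact h1) (by rw [form_s_adj, s_kappa]; exact h2)
      have ht' : form (s i x) theta = form x theta + form x (r i) := by
        rw [s_apply, form_add_left, form_smul_left, dr_theta]
        ring
      have h1 := theta_nonneg hE'
      have hn' : (form (s i x) theta).toNat ≤ n := by omega
      have hriN : r i ∉ N := fun h => absurd (hC _ h) (not_le.mpr hi)
      set N' : Set (Fin 7 → ℤ) := (fun C => s i C) '' N with hN'def
      have hN' : ∀ C' ∈ N', IsPositiveRoot C' := by
        rintro _ ⟨C, hCN, rfl⟩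
        have hne : C ≠ r i := fun h => hriN (h ▸ hCN)
        exact crux (hN C hCN) i hne
      have hC' : ∀ C' ∈ N', 0 ≤ form (s i x) C' := by
        rintro _ ⟨C, hCN, rfl⟩
        rw [form_s_s]
        exact hC C hCN
      have hmem := ih N' hN' (s i x) hE' hC' hn'
      -- transport back through s i
      have himg : (fun y => s i y) ''
          {F : Fin 7 → ℤ | (∃ g ∈ Gset, ∃ w ∈ W6, w g = F) ∧ ∀ C ∈ N', 0 ≤ form F C} ⊆
          {F : Fin 7 → ℤ | (∃ g ∈ Gset, ∃ w ∈ W6, w g = F) ∧ ∀ C ∈ N, 0 ≤ form F C} := by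
        rintro _ ⟨F, ⟨⟨g, hg, w, hw, rfl⟩, hFN'⟩, rfl⟩
        refine ⟨⟨g, hg, s i * w, mul_mem (sW6 i) hw, rfl⟩, ?_⟩
        intro C hCN
        rw [form_s_adj]
        exact hFN' (s i C) ⟨C, hCN, rfl⟩
      have hφ : x = ((s i).toLinearMap.toAddMonoidHom : (Fin 7 → ℤ) →+ (Fin 7 → ℤ)) (s i x) :=
        (s_invol i x).symm
      rw [hφ]
      have hstep := AddSubmonoid.mem_map_of_mem
        ((s i).toLinearMap.toAddMonoidHom : (Fin 7 → ℤ) →+ (Fin 7 → ℤ)) hmem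
      rw [AddMonoidHom.map_mclosure] at hstep
      refine AddSubmonoid.closure_mono ?_ hstep
      exact himg


/-- Lemma II.4, lattice-theoretic content: if `N` is any set of positive roots
and `Ω` is the set of elements of the `W₆`-orbits of `G` meeting every member
of `N` nonnegatively, then every `x` meeting all exceptional classes and all
members of `N` nonnegatively is a nonnegative integer combination of
elements of `Ω`. -/
theorem statement_16 (N : Set (Fin 7 → ℤ)) (hN : ∀ C ∈ N, IsPositiveRoot C)
    (x : Fin 7 → ℤ)
    (hE : ∀ E : Fin 7 → ℤ, form E E = -1 → form E kappa = 1 → 0 ≤ form x E)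
    (hC : ∀ C ∈ N, 0 ≤ form x C) :
    x ∈ AddSubmonoid.closure
      {F : Fin 7 → ℤ | (∃ g ∈ Gset, ∃ w ∈ W6, w g = F) ∧
        ∀ C ∈ N, 0 ≤ form F C} := by
  exact key (form x theta).toNat N hN x hE hC le_rfl
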